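/- Every pre-periodic function is uniformly continuous: if f : ℝ → S¹ is continuous and for every ε > 0 there exists a positive integer N such that |f(x + kN) − f(x)| < ε for all k ∈ ℤ and all x ∈ ℝ, then f is uniformly continuous on ℝ. -/
import Mathlib


open Filter

/-- A continuous function `f : ℝ → ℂ` taking values in the unit circle `S¹` is *pre-periodic*
if for every `ε > 0` there is a positive integer `N` such that
`|f (x + k * N) - f x| < ε` for all integers `k` and all real `x`. -/
def PrePeriodic (f : ℝ → ℂ) : Prop :=
  Continuous f ∧ (∀ x : ℝ, ‖f x‖ = 1) ∧
    ∀ ε : ℝ, 0 < ε → ∃ N : ℕ, 0 < N ∧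
      ∀ (k : ℤ) (x : ℝ), ‖f (x + (k : ℝ) * (N : ℝ)) - f x‖ < ε

/-- Every pre-periodic function is uniformly continuous. -/
theorem preperiodic_uniformContinuous (f : ℝ → ℂ) (hf : PrePeriodic f) :
    UniformContinuous f := by
  obtain ⟨hcont, hnorm, hper⟩ := hf
  rw [Metric.uniformContinuous_iff]
  intro ε hε
  obtain ⟨N, hN, hNε⟩ := hper (ε/3) (by linarith)
  have hN1 : (1:ℝ) ≤ N := by exact_mod_cast hN
  have hNpos : (0:ℝ) < N := by linarith
  have hcompact : IsCompact (Set.Icc (-1 : ℝ) (N + 1)) := isCompact_Icc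
  have hUC : UniformContinuousOn f (Set.Icc (-1 : ℝ) (N + 1)) :=
    hcompact.uniformContinuousOn_of_continuous hcont.continuousOn
  rw [Metric.uniformContinuousOn_iff] at hUC
  obtain ⟨δ, hδ, hδ'⟩ := hUC (ε/3) (by linarith)
  refine ⟨min δ 1, by positivity, ?_⟩
  intro x y hxy
  have hd1 : |x - y| < 1 := by
    rw [Real.dist_eq] at hxy
    exact lt_of_lt_of_le hxy (min_le_right _ _)
  have hdδ : dist x y < δ := lt_of_lt_of_le hxy (min_le_left _ _)
  set k : ℤ := -⌊y / N⌋ with hk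
  have hfl : (⌊y / N⌋ : ℝ) ≤ y / N := Int.floor_le _
  have hfl' : y / N < ⌊y / N⌋ + 1 := Int.lt_floor_add_one _
  have hlo : (⌊y / N⌋ : ℝ) * N ≤ y := (le_div_iff₀ hNpos).mp hfl
  have hhi : y < ((⌊y / N⌋ : ℝ) + 1) * N := (div_lt_iff₀ hNpos).mp hfl'
  have hyk1 : 0 ≤ y + (k:ℝ) * N := by push_cast [hk]; nlinarith
  have hyk2 : y + (k:ℝ) * N ≤ N := by push_cast [hk]; nlinarith
  have hy0 : y + (k:ℝ) * N ∈ Set.Icc (-1:ℝ) (N+1) := ⟨by linarith, by linarith⟩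
  have hx0 : x + (k:ℝ) * N ∈ Set.Icc (-1:ℝ) (N+1) := by
    have := abs_lt.mp hd1
    exact ⟨by linarith [this.1], by linarith [this.2]⟩
  have hdist2 : dist (x + (k:ℝ) * N) (y + (k:ℝ) * N) < δ := by
    rwa [Real.dist_eq, add_sub_add_right_eq_sub, ← Real.dist_eq]
  have h1 : dist (f x) (f (x + (k:ℝ) * N)) < ε/3 := by
    rw [dist_comm, dist_eq_norm]; exact hNε k x
  have h2 : dist (f (x + (k:ℝ) * N)) (f (y + (k:ℝ) * N)) < ε/3 := hδ' _ hx0 _ hy0 hdist2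
  have h3 : dist (f (y + (k:ℝ) * N)) (f y) < ε/3 := by
    rw [dist_eq_norm]; exact hNε k y
  calc dist (f x) (f y) ≤ dist (f x) (f (x + (k:ℝ) * N)) + dist (f (x + (k:ℝ) * N)) (f (y + (k:ℝ) * N)) + dist (f (y + (k:ℝ) * N)) (f y) := dist_triangle4 _ _ _ _
    _ < ε/3 + ε/3 + ε/3 := by linarith
    _ = ε := by ring
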